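/- Let ‖·‖ be a norm on c₀₀ satisfying the Schlumprecht implicit equation. Then for every n ≥ 1, ‖∑_{j=1}^n e_j‖ = n / log₂(n+1). -/

import Mathlib

/-!
Write `1_A` for the indicator vector of a finite set `A` and `f(m) = m / φ(m)`. Strong induction
on `A` gives `‖1_A‖ ≤ f(#A)`: in a chain `E₁ < ⋯ < E_k` either one block contains `A`, and the
average is at most `‖1_A‖ / φ(2) < ‖1_A‖`, or every block cuts out a proper piece of size `b_j`,
with `∑ b_j ≤ #A`, and `∑ f(b_j) ≤ φ(k) f(#A)`. This last inequality comes from the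
submultiplicativity `φ(xy) ≤ φ(x) φ(y)` (giving `f(b) ≤ b φ(m/b) / φ(m)`) and Jensen's inequality
for the concave `φ`. Conversely, the chain of singletons of `A` shows `‖1_A‖ ≥ f(#A)`.
-/
open Filter Topology

/-- The coordinatewise restriction of a finitely supported sequence to a finite index set. -/
noncomputable def restrF (E : Finset ℕ) (ξ : ℕ →₀ ℝ) : ℕ →₀ ℝ :=
  Finsupp.filter (· ∈ E) ξ

/-- The sup-norm of a finitely supported sequence. -/
noncomputable def supNormF (ξ : ℕ →₀ ℝ) : ℝ := ⨆ i, |ξ i|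

/-- The set of values appearing in the inner supremum of the Schlumprecht implicit
equation: all numbers `(1/log₂(k+1)) ∑_{j<k} ‖E_j ξ‖` over chains `E 0 < ... < E (k-1)`
of nonempty finite sets with `k ≥ 2`. -/
noncomputable def schlumprechtSet (nrm : (ℕ →₀ ℝ) → ℝ) (ξ : ℕ →₀ ℝ) : Set ℝ :=
  {r | ∃ (k : ℕ) (E : ℕ → Finset ℕ), 2 ≤ k ∧
    (∀ j < k, (E j).Nonempty) ∧
    (∀ j, j + 1 < k → ∀ a ∈ E j, ∀ b ∈ E (j + 1), a < b) ∧
    r = (1 / Real.logb 2 (k + 1)) * ∑ j ∈ Finset.range k, nrm (restrF (E j) ξ)}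

/-- `nrm` is a norm on `c₀₀` satisfying the Schlumprecht implicit equation. -/
def IsSchlumprechtNorm (nrm : (ℕ →₀ ℝ) → ℝ) : Prop :=
  (∀ ξ η, nrm (ξ + η) ≤ nrm ξ + nrm η) ∧
  (∀ (c : ℝ) (ξ), nrm (c • ξ) = |c| * nrm ξ) ∧
  (∀ ξ, nrm ξ = 0 ↔ ξ = 0) ∧
  (∀ ξ, nrm ξ = max (supNormF ξ) (sSup (schlumprechtSet nrm ξ)))

namespace Schlumprecht

open Finset Real

noncomputable def phi (x : ℝ) : ℝ := logb 2 (x + 1)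

lemma phi_pos {x : ℝ} (hx : 0 < x) : 0 < phi x :=
  logb_pos one_lt_two (by linarith)

lemma phi_nonneg {x : ℝ} (hx : 0 ≤ x) : 0 ≤ phi x :=
  logb_nonneg one_lt_two (by linarith)

lemma phi_le_phi {x y : ℝ} (hx : 0 ≤ x) (hxy : x ≤ y) : phi x ≤ phi y :=
  logb_le_logb_of_le one_lt_two (by linarith) (by linarith)

lemma phi_one : phi 1 = 1 := by norm_num [phi]

lemma one_lt_phi_two : 1 < phi 2 := by
  rw [phi, lt_logb_iff_rpow_lt one_lt_two (by norm_num)]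
  norm_num

lemma phi_natCast_le (m : ℕ) : phi m ≤ m := by
  rw [phi, logb_le_iff_le_rpow one_lt_two (by positivity), rpow_natCast]
  exact_mod_cast Nat.lt_two_pow_self

lemma inv_log_two_le_phi {x : ℝ} (hx : 2 ≤ x) : 1 / log 2 ≤ phi x := by
  have hlog3 : 1 ≤ log 3 := by
    rw [le_log_iff_exp_le (by norm_num)]
    exact exp_one_lt_d9.le.trans (by norm_num)
  rw [phi, logb, div_le_div_iff_of_pos_right (log_pos one_lt_two)]
  exact hlog3.trans (log_le_log (by norm_num) (by linarith))

/-- The secant slopes of the convex map `t ↦ t ^ phi y` from `1` increase: the slope on `[1, 2]`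
is `y`, the slope on `[1, x + 1]` is `(2 ^ (phi x * phi y) - 1) / x`. -/
lemma phi_mul_le {x y : ℝ} (hx : 1 ≤ x) (hy : 1 ≤ y) : phi (x * y) ≤ phi x * phi y := by
  have hb : 1 ≤ phi y := by simpa [phi_one] using phi_le_phi zero_le_one hy
  have hxa : (2 : ℝ) ^ phi x = x + 1 := rpow_logb two_pos (by norm_num) (by linarith)
  have hyb : (2 : ℝ) ^ phi y = y + 1 := rpow_logb two_pos (by norm_num) (by linarith)
  have slope := (convexOn_rpow hb).secant_mono (a := 1) (x := 2) (y := x + 1)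
    (by norm_num) (by norm_num) (by simp only [Set.mem_Ici]; linarith) (by norm_num)
    (by linarith) (by linarith)
  norm_num [hyb, le_div_iff₀ (by linarith : 0 < x)] at slope
  rw [phi, logb_le_iff_le_rpow one_lt_two (by nlinarith), rpow_mul zero_le_two, hxa]
  linarith

lemma concaveOn_phi : ConcaveOn ℝ (Set.Ici 0) phi := by
  refine ((strictConcaveOn_log_Ioi.concaveOn.translate_right 1).smul
    (inv_nonneg.2 (log_pos one_lt_two).le)).subset (fun x (hx : 0 ≤ x) ↦ ?_) (convex_Ici 0)
    |>.congr fun x _ ↦ ?_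
  · show 0 < 1 + x
    linarith
  · simp [phi, logb, add_comm, div_eq_inv_mul]

lemma mul_phi_div_le {k σ m : ℝ} (hk : 2 ≤ k) (hσ : 0 < σ) (hσm : σ ≤ m) :
    σ * phi (k * m / σ) ≤ m * phi k := by
  have hmσ : 1 ≤ m / σ := by rwa [le_div_iff₀ hσ, one_mul]
  have hsplit : phi (k * m / σ) ≤ phi k + logb 2 (m / σ) := by
    rw [phi, phi, ← logb_mul (by linarith) (by linarith)]
    have : 0 ≤ k * m / σ := div_nonneg (mul_nonneg (by linarith) (by linarith)) hσ.le
    refine logb_le_logb_of_le one_lt_two (by linarith) ?_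
    rw [mul_div_assoc]
    linarith
  have hlog : σ * logb 2 (m / σ) ≤ (m - σ) * phi k := by
    calc σ * logb 2 (m / σ) ≤ σ * (m / σ - 1) / log 2 := by
          rw [logb, mul_div_assoc]
          gcongr
          exact log_le_sub_one_of_pos (by linarith)
      _ = (m - σ) * (1 / log 2) := by field_simp
      _ ≤ (m - σ) * phi k := mul_le_mul_of_nonneg_left (inv_log_two_le_phi hk) (by linarith)
  calc σ * phi (k * m / σ) ≤ σ * (phi k + logb 2 (m / σ)) := by gcongr
    _ ≤ m * phi k := by linarith

/-- Jensen's inequality for `phi` with weights `w i / ∑ w`, followed by `mul_phi_div_le`. -/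
lemma sum_mul_phi_div_le {ι : Type*} {s : Finset ι} (hs : 2 ≤ #s) {w : ι → ℝ}
    (hw : ∀ i ∈ s, 0 ≤ w i) {m : ℝ} (hsum : ∑ i ∈ s, w i ≤ m) :
    ∑ i ∈ s, w i * phi (m / w i) ≤ m * phi #s := by
  set σ := ∑ i ∈ s, w i
  have hphi : 0 < phi #s := phi_pos (by exact_mod_cast (by omega : 0 < #s))
  obtain hσ | hσ : 0 = σ ∨ 0 < σ := (sum_nonneg hw).eq_or_lt
  · have hw0 : ∀ i ∈ s, w i = 0 := (sum_eq_zero_iff_of_nonneg hw).1 hσ.symm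
    rw [sum_eq_zero fun i hi ↦ by rw [hw0 i hi, zero_mul]]
    exact mul_nonneg (by linarith) hphi.le
  have hm : 0 ≤ m := hσ.le.trans hsum
  have jensen := concaveOn_phi.le_map_sum (t := s) (w := fun i ↦ w i / σ) (p := fun i ↦ m / w i)
    (fun i hi ↦ div_nonneg (hw i hi) hσ.le) (by rw [← sum_div, div_self hσ.ne'])
    (fun i hi ↦ div_nonneg hm (hw i hi))
  simp only [smul_eq_mul] at jensen
  have hmean : ∑ i ∈ s, w i / σ * (m / w i) ≤ #s * m / σ := by
    rw [mul_div_assoc, ← nsmul_eq_mul, ← sum_const]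
    refine sum_le_sum fun i hi ↦ ?_
    rcases (hw i hi).eq_or_lt with h0 | hpos
    · simpa [← h0] using div_nonneg hm hσ.le
    · rw [div_mul_div_comm, mul_comm (w i), mul_div_mul_right _ _ hpos.ne']
  calc ∑ i ∈ s, w i * phi (m / w i) = σ * ∑ i ∈ s, w i / σ * phi (m / w i) := by
        rw [mul_sum]
        refine sum_congr rfl fun i _ ↦ ?_
        field_simp
    _ ≤ σ * phi (#s * m / σ) :=
        mul_le_mul_of_nonneg_left (jensen.trans (phi_le_phi (sum_nonneg fun i hi ↦
          mul_nonneg (div_nonneg (hw i hi) hσ.le) (div_nonneg hm (hw i hi))) hmean)) hσ.le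
    _ ≤ m * phi #s := mul_phi_div_le (by exact_mod_cast hs) hσ hsum

lemma sum_div_phi_le {ι : Type*} {s : Finset ι} (hs : 2 ≤ #s) {b : ι → ℕ} {m : ℕ}
    (hsum : ∑ i ∈ s, b i ≤ m) :
    ∑ i ∈ s, (b i : ℝ) / phi (b i) ≤ phi #s * (m / phi m) := by
  have hterm : ∀ i ∈ s, (b i : ℝ) / phi (b i) ≤ b i * phi (m / b i) / phi m := by
    intro i hi
    rcases Nat.eq_zero_or_pos (b i) with h0 | hpos
    · simp [h0]
    have hb : (1 : ℝ) ≤ b i := by exact_mod_cast hpos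
    have hbm : (b i : ℝ) ≤ m := by exact_mod_cast (single_le_sum (by simp) hi).trans hsum
    have hmb : 1 ≤ (m : ℝ) / b i := by rwa [le_div_iff₀ (by linarith), one_mul]
    have hsub := phi_mul_le hb hmb
    rw [mul_div_cancel₀ _ (by linarith)] at hsub
    rw [div_le_div_iff₀ (phi_pos (by linarith)) (phi_pos (by linarith))]
    calc (b i : ℝ) * phi m ≤ b i * (phi (b i) * phi (m / b i)) := by gcongr
      _ = b i * phi (m / b i) * phi (b i) := by ring
  calc ∑ i ∈ s, (b i : ℝ) / phi (b i) ≤ (∑ i ∈ s, b i * phi (m / b i)) / phi m := by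
        rw [sum_div]; exact sum_le_sum hterm
    _ ≤ m * phi #s / phi m := by
        gcongr
        · exact phi_nonneg m.cast_nonneg
        · exact sum_mul_phi_div_le hs (fun i _ ↦ (b i).cast_nonneg) (by exact_mod_cast hsum)
    _ = phi #s * (m / phi m) := by ring

section Blocks

variable {k : ℕ} {E : ℕ → Finset ℕ} (hne : ∀ j < k, (E j).Nonempty)
  (hord : ∀ j, j + 1 < k → ∀ a ∈ E j, ∀ b ∈ E (j + 1), a < b)
include hne hord

lemma lt_of_mem_block {i j : ℕ} (hij : i < j) (hj : j < k) {a b : ℕ} (ha : a ∈ E i)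
    (hb : b ∈ E j) : a < b := by
  induction j, hij using Nat.le_induction generalizing b with
  | base => exact hord i hj a ha b hb
  | succ j hij ih =>
    obtain ⟨c, hc⟩ := hne j (by omega)
    exact (ih (by omega) hc).trans (hord j hj c hc b hb)

lemma pairwiseDisjoint_blocks : ((range k : Finset ℕ) : Set ℕ).PairwiseDisjoint E := by
  intro i hi j hj hij
  simp only [coe_range, Set.mem_Iio] at hi hj
  refine disjoint_left.2 fun a hai haj ↦ ?_
  rcases hij.lt_or_gt with hlt | hgt
  · exact (lt_of_mem_block hne hord hlt hj hai haj).false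
  · exact (lt_of_mem_block hne hord hgt hi haj hai).false

end Blocks

lemma exists_singleton_blocks (A : Finset ℕ) : ∃ E : ℕ → Finset ℕ,
    (∀ j < #A, (E j).Nonempty ∧ E j ⊆ A) ∧
    ∀ j, j + 1 < #A → ∀ a ∈ E j, ∀ b ∈ E (j + 1), a < b := by
  let g := A.orderEmbOfFin rfl
  refine ⟨fun j ↦ if hj : j < #A then {g ⟨j, hj⟩} else ∅, fun j hj ↦ ?_, fun j hj a ha b hb ↦ ?_⟩
  · simp only [hj, dite_true, singleton_nonempty, singleton_subset_iff, true_and]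
    exact A.orderEmbOfFin_mem rfl _
  · simp only [show j < #A by omega, hj, dite_true, mem_singleton] at ha hb
    rw [ha, hb]
    exact g.strictMono (by simp [Fin.lt_def])

noncomputable def onesOn (A : Finset ℕ) : ℕ →₀ ℝ := ∑ j ∈ A, Finsupp.single j 1

lemma onesOn_apply (A : Finset ℕ) (i : ℕ) : onesOn A i = if i ∈ A then 1 else 0 := by
  simp [onesOn, Finsupp.finsetSum_apply, Finsupp.single_apply]

lemma onesOn_empty : onesOn ∅ = 0 := by simp [onesOn]

lemma restrF_onesOn (E A : Finset ℕ) : restrF E (onesOn A) = onesOn (A ∩ E) := by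
  ext i
  by_cases hE : i ∈ E <;> simp [restrF, onesOn_apply, hE]

lemma supNormF_nonneg (ξ : ℕ →₀ ℝ) : 0 ≤ supNormF ξ :=
  Real.iSup_nonneg fun i ↦ abs_nonneg (ξ i)

lemma supNormF_onesOn_le (A : Finset ℕ) : supNormF (onesOn A) ≤ 1 :=
  ciSup_le fun i ↦ by by_cases hi : i ∈ A <;> simp [onesOn_apply, hi]

lemma one_le_supNormF_onesOn {A : Finset ℕ} {a : ℕ} (ha : a ∈ A) : 1 ≤ supNormF (onesOn A) := by
  have hbdd : BddAbove (Set.range fun i ↦ |onesOn A i|) :=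
    ⟨1, Set.forall_mem_range.2 fun i ↦ by by_cases hi : i ∈ A <;> simp [onesOn_apply, hi]⟩
  simpa [supNormF, onesOn_apply, ha] using le_ciSup hbdd a

end Schlumprecht

namespace IsSchlumprechtNorm

open Finset Schlumprecht

variable {nrm : (ℕ →₀ ℝ) → ℝ} (h : IsSchlumprechtNorm nrm)
include h

lemma supNormF_le (ξ : ℕ →₀ ℝ) : supNormF ξ ≤ nrm ξ :=
  (h.2.2.2 ξ).symm ▸ le_max_left _ _

lemma nonneg (ξ : ℕ →₀ ℝ) : 0 ≤ nrm ξ :=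
  (supNormF_nonneg ξ).trans (h.supNormF_le ξ)

lemma le_of_mem_schlumprechtSet {ξ : ℕ →₀ ℝ} (hbdd : BddAbove (schlumprechtSet nrm ξ)) {r : ℝ}
    (hr : r ∈ schlumprechtSet nrm ξ) : r ≤ nrm ξ :=
  (h.2.2.2 ξ).symm ▸ (le_csSup hbdd hr).trans (le_max_right _ _)

lemma one_le_nrm_onesOn {A : Finset ℕ} (hA : A.Nonempty) : 1 ≤ nrm (onesOn A) :=
  (one_le_supNormF_onesOn hA.choose_spec).trans (h.supNormF_le _)

/-- A block `E j` containing `A` contributes `‖1_A‖ / φ(k)`; otherwise every block meets `A`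
in a proper subset, and the induction hypothesis together with `sum_div_phi_le` applies. -/
lemma le_max_of_mem_schlumprechtSet_onesOn {A : Finset ℕ}
    (ih : ∀ B ⊂ A, nrm (onesOn B) ≤ #B / phi #B) {r : ℝ}
    (hr : r ∈ schlumprechtSet nrm (onesOn A)) :
    r ≤ max (#A / phi #A) (nrm (onesOn A) / phi 2) := by
  obtain ⟨k, E, hk, hne, hord, rfl⟩ := hr
  change 1 / phi k * _ ≤ _
  have hdisj := pairwiseDisjoint_blocks hne hord
  have hphik : 0 < phi k := phi_pos (by exact_mod_cast (by omega : 0 < k))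
  simp_rw [restrF_onesOn]
  by_cases hcover : ∃ j < k, A ⊆ E j
  · obtain ⟨j₀, hj₀, hA⟩ := hcover
    have hsum : ∑ j ∈ range k, nrm (onesOn (A ∩ E j)) = nrm (onesOn A) := by
      rw [sum_eq_single_of_mem j₀ (mem_range.2 hj₀), inter_eq_left.2 hA]
      intro j hj hjj₀
      have hempty : A ∩ E j = ∅ := disjoint_iff_inter_eq_empty.1
        ((hdisj (mem_coe.2 hj) (mem_coe.2 (mem_range.2 hj₀)) hjj₀).symm.mono_left hA)
      rw [hempty, onesOn_empty, (h.2.2.1 0).2 rfl]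
    rw [hsum, one_div_mul_eq_div]
    refine le_max_of_le_right (div_le_div_of_nonneg_left (h.nonneg _) (phi_pos two_pos) ?_)
    exact phi_le_phi zero_le_two (by exact_mod_cast hk)
  · push Not at hcover
    have hcard : ∑ j ∈ range k, #(A ∩ E j) ≤ #A := by
      rw [← card_biUnion (hdisj.mono fun j ↦ inter_subset_right)]
      exact card_le_card (biUnion_subset.2 fun j _ ↦ inter_subset_left)
    refine le_max_of_le_left ?_
    calc 1 / phi k * ∑ j ∈ range k, nrm (onesOn (A ∩ E j))
        ≤ 1 / phi k * ∑ j ∈ range k, (#(A ∩ E j) : ℝ) / phi #(A ∩ E j) := by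
          gcongr with j hj
          exact ih _ (Finset.ssubset_iff_subset_ne.2
            ⟨inter_subset_left, fun heq ↦ hcover j (mem_range.1 hj) (inter_eq_left.1 heq)⟩)
      _ ≤ 1 / phi k * (phi k * (#A / phi #A)) := by
          gcongr
          simpa using sum_div_phi_le (s := range k) (by simpa using hk) hcard
      _ = #A / phi #A := by field_simp

lemma nrm_onesOn_le (A : Finset ℕ) : nrm (onesOn A) ≤ #A / phi #A := by
  induction A using Finset.strongInduction with | H A ih =>
  rcases A.eq_empty_or_nonempty with rfl | hA
  · simp [onesOn_empty, (h.2.2.1 0).2 rfl]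
  have hone : 1 ≤ (#A : ℝ) / phi #A := by
    rw [one_le_div (phi_pos (by exact_mod_cast hA.card_pos))]
    exact phi_natCast_le _
  set x := nrm (onesOn A)
  have hx : x ≤ max (#A / phi #A) (x / phi 2) := by
    refine (h.2.2.2 _).trans_le (max_le ?_ ?_)
    · exact (supNormF_onesOn_le A).trans (hone.trans (le_max_left _ _))
    · exact Real.sSup_le (fun r hr ↦ h.le_max_of_mem_schlumprechtSet_onesOn ih hr)
        ((zero_le_one.trans hone).trans (le_max_left _ _))
  have hxpos : 0 < x := zero_lt_one.trans_le (h.one_le_nrm_onesOn hA)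
  exact (le_max_iff.1 hx).resolve_right (div_lt_self hxpos one_lt_phi_two).not_ge

lemma bddAbove_schlumprechtSet_onesOn (A : Finset ℕ) :
    BddAbove (schlumprechtSet nrm (onesOn A)) :=
  ⟨_, fun _ hr ↦ h.le_max_of_mem_schlumprechtSet_onesOn (fun B _ ↦ h.nrm_onesOn_le B) hr⟩

lemma le_nrm_onesOn (A : Finset ℕ) : #A / phi #A ≤ nrm (onesOn A) := by
  rcases Nat.lt_or_ge #A 2 with hA | hA
  · interval_cases hcard : #A
    · simpa using h.nonneg _
    · simpa [phi_one] using h.one_le_nrm_onesOn (card_pos.1 (by omega))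
  obtain ⟨E, hE, hord⟩ := exists_singleton_blocks A
  have hmem : 1 / phi #A * ∑ j ∈ range #A, nrm (restrF (E j) (onesOn A)) ∈
      schlumprechtSet nrm (onesOn A) := ⟨#A, E, hA, fun j hj ↦ (hE j hj).1, hord, rfl⟩
  calc (#A : ℝ) / phi #A = 1 / phi #A * ∑ j ∈ range #A, 1 := by simp [div_eq_inv_mul]
    _ ≤ 1 / phi #A * ∑ j ∈ range #A, nrm (restrF (E j) (onesOn A)) := by
        gcongr with j hj
        · exact one_div_nonneg.2 (phi_nonneg (Nat.cast_nonneg _))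
        rw [restrF_onesOn, inter_eq_right.2 (hE j (mem_range.1 hj)).2]
        exact h.one_le_nrm_onesOn (hE j (mem_range.1 hj)).1
    _ ≤ nrm (onesOn A) := h.le_of_mem_schlumprechtSet (h.bddAbove_schlumprechtSet_onesOn A) hmem

theorem nrm_onesOn (A : Finset ℕ) : nrm (onesOn A) = #A / phi #A :=
  (h.nrm_onesOn_le A).antisymm (h.le_nrm_onesOn A)

end IsSchlumprechtNorm

theorem schlumprecht_norm_sum_units_general (nrm : (ℕ →₀ ℝ) → ℝ) (h : IsSchlumprechtNorm nrm)
    (n : ℕ) :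
    nrm (∑ j ∈ Finset.Icc 1 n, Finsupp.single j (1 : ℝ)) = n / Real.logb 2 (n + 1) := by
  have key := h.nrm_onesOn (Finset.Icc 1 n)
  rw [Nat.card_Icc, Nat.add_sub_cancel] at key
  exact key

theorem schlumprecht_norm_sum_units (nrm : (ℕ →₀ ℝ) → ℝ) (h : IsSchlumprechtNorm nrm)
    (n : ℕ) (hn : 1 ≤ n) :
    nrm (∑ j ∈ Finset.Icc 1 n, Finsupp.single j (1 : ℝ)) = n / Real.logb 2 (n + 1) :=
  schlumprecht_norm_sum_units_general nrm h n
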